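/- Let (X,d) be a metric space, let S be a finite subset of X, let T be a tour of S (a Hamiltonian cycle on S, with weight w(T) equal to the sum of distances of consecutive points), and let C ⊆ S. Suppose T crosses C exactly r times, where an edge of T crosses C if exactly one of its endpoints lies in C, and let P ⊆ C be the set of endpoints in C of the crossing edges. Then there exists a tour T′ of S that crosses C at most twice and satisfies w(T′) ≤ w(T) + 4 · w(MST(P)). -/

import Mathlib

open Metric

/-- The total weight of a graph on the points of a finite set `P` in a metric space:
the sum over its edges `{u,v}` of `dist u v`. -/
noncomputable def graphWeight {X : Type*} [MetricSpace X] (P : Finset X)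
    (T : SimpleGraph {x // x ∈ P}) : ℝ :=
  ∑ e ∈ T.edgeSet.toFinite.toFinset,
    Sym2.lift ⟨fun (a b : {x // x ∈ P}) => dist (a : X) (b : X), fun _ _ => dist_comm _ _⟩ e

/-- `mstWeight P` is the minimum total edge weight of a spanning tree on the finite point
set `P` (by convention it is `0` when `|P| ≤ 1`, via `Real.sInf` of the empty set for `P = ∅`). -/
noncomputable def mstWeight {X : Type*} [MetricSpace X] (P : Finset X) : ℝ :=
  sInf {w : ℝ | ∃ T : SimpleGraph {x // x ∈ P}, T.Connected ∧ T.IsAcyclic ∧ w = graphWeight P T}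

/-- A tour of a finite set `S` is a Hamiltonian cycle on `S`, encoded as an injective map
`f : ZMod n → X` whose range is exactly `S`; consecutive points `f i`, `f (i+1)` are the
edges of the cycle. -/
def IsTour {X : Type*} [MetricSpace X] (S : Finset X) {n : ℕ} (f : ZMod n → X) : Prop :=
  Function.Injective f ∧ ∀ x : X, x ∈ S ↔ ∃ i, f i = x

/-- The weight of a tour: the sum of distances between consecutive points. -/
noncomputable def tourWeight {X : Type*} [MetricSpace X] {n : ℕ} [NeZero n]
    (f : ZMod n → X) : ℝ :=
  ∑ i : ZMod n, dist (f i) (f (i + 1))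

/-!
Call a crossing edge of the tour an exit or an entry according to whether its first endpoint
lies in `C`. Two exits (or two entries) `(a, b)`, `(c, d)` can be replaced by `(a, c)`, `(b, d)`
by reversing the arc of the tour between them (a 2-opt move). This removes two crossings and,
by the triangle inequality, costs at most twice the distance between their endpoints in `C`.

Give every crossing point `x` a location `ψ x`, initially `x` itself, and track the potential
`w(T) + 2 ∑ dist x (ψ x)`. Merging two exits (or two entries) with the same location does not
increase it, so after all such merges each location carries at most two crossings. Now delete
the vertices of a minimum spanning tree of `P` one at a time, always one whose removal keeps the
tree connected: moving the crossings located at the deleted vertex `p` to a neighbour `q` raises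
the potential by at most `4 dist p q`. Once a single location is left at most two crossings
remain, and the total cost is at most `4 w(MST(P))`.
-/

open Finset

namespace ZMod

variable {n : ℕ} [NeZero n]

lemma sum_eq_sum_range {M : Type*} [AddCommMonoid M] (g : ZMod n → M) :
    ∑ k, g k = ∑ a ∈ range n, g a :=
  Finset.sum_nbij' (fun k => k.val) (fun a => (a : ZMod n)) (by simp [ZMod.val_lt])
    (by simp) (by simp) (fun a ha => ZMod.val_cast_of_lt (mem_range.mp ha)) (by simp)

lemma val_add_one_lt_of_ne_neg_one {k : ZMod n} (hk : k ≠ -1) : k.val + 1 < n := by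
  refine lt_of_le_of_ne (ZMod.val_lt k) fun h => hk ?_
  rw [eq_neg_iff_add_eq_zero, ← ZMod.natCast_zmod_val k, ← Nat.cast_one, ← Nat.cast_add, h,
    ZMod.natCast_self]

lemma natCast_pred : ((n - 1 : ℕ) : ZMod n) = -1 := by
  rw [Nat.cast_sub (NeZero.one_le), ZMod.natCast_self, Nat.cast_one, zero_sub]

end ZMod

section Tour

variable {X : Type*} {n : ℕ}

def tourEdges [NeZero n] (f : ZMod n → X) : Multiset (Sym2 X) :=
  ∑ k, {s(f k, f (k + 1))}

lemma sum_map_tourEdges [NeZero n] {M : Type*} [AddCommMonoid M] (h : Sym2 X → M)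
    (f : ZMod n → X) :
    ((tourEdges f).map h).sum = ∑ k, h s(f k, f (k + 1)) := by
  rw [tourEdges, ← Multiset.coe_mapAddMonoidHom, map_sum, ← Multiset.coe_sumAddMonoidHom,
    map_sum]
  simp

lemma tourWeight_eq_sum_map_tourEdges [MetricSpace X] [NeZero n] (f : ZMod n → X) :
    tourWeight f = ((tourEdges f).map (Sym2.lift ⟨dist, dist_comm⟩)).sum := by
  rw [sum_map_tourEdges]; rfl

lemma tourEdges_comp_add_right [NeZero n] (f : ZMod n → X) (t : ZMod n) :
    tourEdges (fun k => f (k + t)) = tourEdges f := by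
  simp only [tourEdges, add_right_comm _ (1 : ZMod n) t]
  exact Fintype.sum_equiv (Equiv.addRight t) _ _ fun _ => rfl

def reflectPrefix (m : ℕ) (k : ZMod n) : ZMod n :=
  if k.val ≤ m then ((m - k.val : ℕ) : ZMod n) else k

lemma reflectPrefix_natCast {m a : ℕ} (ha : a < n) :
    reflectPrefix m (a : ZMod n) = if a ≤ m then ((m - a : ℕ) : ZMod n) else a := by
  simp [reflectPrefix, ZMod.val_cast_of_lt ha]

lemma reflectPrefix_involutive [NeZero n] {m : ℕ} (hm : m < n) :
    Function.Involutive (reflectPrefix (n := n) m) := by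
  intro k
  by_cases hk : k.val ≤ m
  · have hlt : m - k.val < n := by omega
    simp only [reflectPrefix, if_pos hk, ZMod.val_cast_of_lt hlt, if_pos (Nat.sub_le _ _),
      Nat.sub_sub_self hk, ZMod.natCast_zmod_val]
  · simp [reflectPrefix, hk]

lemma tourEdges_eq_sum_range {N m : ℕ} (g : ZMod (N + 1) → X) (hm : m + 1 ≤ N) :
    tourEdges g = ∑ a ∈ range m, {s(g a, g (a + 1))} + {s(g m, g (m + 1))} +
      ∑ a ∈ Ico (m + 1) N, {s(g a, g (a + 1))} + {s(g (-1), g 0)} := by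
  have hlast : (N : ZMod (N + 1)) = -1 := by simpa using ZMod.natCast_pred (n := N + 1)
  rw [tourEdges, ZMod.sum_eq_sum_range, sum_range_succ, ← sum_range_add_sum_Ico _ hm,
    sum_range_succ, hlast, neg_add_cancel]

lemma tourEdges_comp_reflectPrefix [NeZero n] (f : ZMod n → X) {m : ℕ} (hm : m + 1 < n) :
    tourEdges (f ∘ reflectPrefix m) + {s(f (-1), f 0), s(f m, f (m + 1))} =
      tourEdges f + {s(f (-1), f m), s(f 0, f (m + 1))} := by
  obtain ⟨N, rfl⟩ : ∃ N, n = N + 1 := ⟨n - 1, by omega⟩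
  have hreflected : ∑ a ∈ range m, {s(f (reflectPrefix m a), f (reflectPrefix m (a + 1)))} =
      ∑ a ∈ range m, ({s(f a, f (a + 1))} : Multiset (Sym2 X)) := by
    rw [← sum_range_reflect (fun a => ({s(f a, f (a + 1))} : Multiset (Sym2 X)))]
    refine sum_congr rfl fun a ha => ?_
    have ha : a < m := mem_range.mp ha
    simp only [← Nat.cast_add_one, reflectPrefix_natCast (by omega : a < N + 1),
      reflectPrefix_natCast (by omega : a + 1 < N + 1), if_pos ha.le,
      if_pos (by omega : a + 1 ≤ m), show m - 1 - a + 1 = m - a by omega,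
      show m - (a + 1) = m - 1 - a by omega, Sym2.eq_swap]
  have hfixed : ∑ a ∈ Ico (m + 1) N, {s(f (reflectPrefix m a), f (reflectPrefix m (a + 1)))} =
      ∑ a ∈ Ico (m + 1) N, ({s(f a, f (a + 1))} : Multiset (Sym2 X)) := by
    refine sum_congr rfl fun a ha => ?_
    have ha := mem_Ico.mp ha
    simp only [← Nat.cast_add_one, reflectPrefix_natCast (by omega : a < N + 1),
      reflectPrefix_natCast (by omega : a + 1 < N + 1), if_neg (by omega : ¬ a ≤ m),
      if_neg (by omega : ¬ a + 1 ≤ m)]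
  have hm_edge : s(f (reflectPrefix m m), f (reflectPrefix m (m + 1))) = s(f 0, f (m + 1)) := by
    simp only [← Nat.cast_add_one, reflectPrefix_natCast (by omega : m < N + 1),
      reflectPrefix_natCast (by omega : m + 1 < N + 1), le_refl, if_true, Nat.sub_self,
      if_neg (by omega : ¬ m + 1 ≤ m), Nat.cast_zero]
  have hlast_edge : s(f (reflectPrefix m (-1)), f (reflectPrefix m 0)) = s(f (-1), f m) := by
    simp [reflectPrefix, ZMod.val_neg_one, show ¬ N ≤ m by omega]
  have hmN : m + 1 ≤ N := by omega
  rw [tourEdges_eq_sum_range _ hmN, tourEdges_eq_sum_range f hmN]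
  simp only [Function.comp_apply, hreflected, hfixed, hm_edge, hlast_edge,
    Multiset.insert_eq_cons, ← Multiset.singleton_add]
  abel

theorem exists_perm_tourEdges_add [NeZero n] (f : ZMod n → X) {i j : ZMod n} (hij : i ≠ j) :
    ∃ e : Equiv.Perm (ZMod n), tourEdges (f ∘ e) + {s(f i, f (i + 1)), s(f j, f (j + 1))} =
      tourEdges f + {s(f i, f j), s(f (i + 1), f (j + 1))} := by
  set t := i + 1
  have hm : (j - t).val + 1 < n :=
    ZMod.val_add_one_lt_of_ne_neg_one fun h => hij (by linear_combination -h)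
  have key := tourEdges_comp_reflectPrefix (fun k => f (k + t)) hm
  rw [ZMod.natCast_zmod_val, tourEdges_comp_add_right] at key
  rw [show -1 + t = i by ring, zero_add, sub_add_cancel, show j - t + 1 + t = j + 1 by ring] at key
  exact ⟨(reflectPrefix_involutive (Nat.lt_of_succ_lt hm)).toPerm.trans (Equiv.addRight t), key⟩

end Tour

lemma IsTour.comp_perm {X : Type*} [MetricSpace X] {S : Finset X} {n : ℕ} {f : ZMod n → X}
    (hf : IsTour S f) (e : Equiv.Perm (ZMod n)) : IsTour S (f ∘ e) :=
  ⟨hf.1.comp e.injective, fun x => (hf.2 x).trans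
    ⟨fun ⟨i, hi⟩ => ⟨e.symm i, by simp [hi]⟩, fun ⟨i, hi⟩ => ⟨e i, hi⟩⟩⟩

section Crossings

variable {X : Type*} [DecidableEq X] (C : Finset X) {n : ℕ} [NeZero n]

def crossings (f : ZMod n → X) : Finset (ZMod n) :=
  univ.filter fun i => Xor (f i ∈ C) (f (i + 1) ∈ C)

def crossingPoint (f : ZMod n → X) (i : ZMod n) : X :=
  if f i ∈ C then f i else f (i + 1)

def crossingPoints (f : ZMod n → X) : Multiset X :=
  (crossings C f).val.map (crossingPoint C f)

/-- Defined on unordered edges, so that it survives reversing an arc of the tour. -/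
def crossingEndpoint : Sym2 X → Multiset X :=
  Sym2.lift ⟨fun a b => if Xor (a ∈ C) (b ∈ C) then {if a ∈ C then a else b} else 0,
    fun a b => by by_cases a ∈ C <;> by_cases b ∈ C <;> simp [*]⟩

variable {C}

lemma mem_crossings {f : ZMod n → X} {i : ZMod n} :
    i ∈ crossings C f ↔ Xor (f i ∈ C) (f (i + 1) ∈ C) := by
  simp [crossings]

lemma crossingEndpoint_eq_zero {a b : X} (h : a ∈ C ↔ b ∈ C) :
    crossingEndpoint C s(a, b) = 0 := by
  simp [crossingEndpoint, h]

lemma crossingEndpoint_edge (f : ZMod n → X) (i : ZMod n) :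
    crossingEndpoint C s(f i, f (i + 1)) =
      if i ∈ crossings C f then {crossingPoint C f i} else 0 := by
  simp [crossingEndpoint, crossingPoint, mem_crossings]

lemma crossingPoints_eq_sum (f : ZMod n → X) :
    crossingPoints C f = ∑ i, crossingEndpoint C s(f i, f (i + 1)) := by
  rw [crossingPoints, ← Multiset.sum_map_singleton ((crossings C f).val.map _), Multiset.map_map]
  simp only [crossingEndpoint_edge, sum_ite_mem, univ_inter]
  rfl

lemma mem_crossingPoints {f : ZMod n → X} {x : X} :
    x ∈ crossingPoints C f ↔
      x ∈ C ∧ ∃ i, Xor (f i ∈ C) (f (i + 1) ∈ C) ∧ (f i = x ∨ f (i + 1) = x) := by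
  simp only [crossingPoints, Multiset.mem_map, mem_val, mem_crossings, crossingPoint]
  constructor
  · rintro ⟨i, hi, rfl⟩
    by_cases h : f i ∈ C <;> simp only [h, if_true, if_false] <;>
      exact ⟨by rw [xor_def] at hi; tauto, i, hi, by simp⟩
  · rintro ⟨hx, i, hi, rfl | rfl⟩
    · exact ⟨i, hi, if_pos hx⟩
    · exact ⟨i, hi, if_neg (by rw [xor_def] at hi; tauto)⟩

lemma card_crossingPoints (f : ZMod n → X) :
    (crossingPoints C f).card = {i | Xor (f i ∈ C) (f (i + 1) ∈ C)}.ncard := by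
  rw [crossingPoints, Multiset.card_map, card_val, ← Set.ncard_coe_finset, crossings, coe_filter]
  simp

lemma countP_crossingPoints_le_two {f : ZMod n → X} {ψ : X → X}
    (h : ∀ i ∈ crossings C f, ∀ j ∈ crossings C f, i ≠ j → (f i ∈ C ↔ f j ∈ C) →
      ψ (crossingPoint C f i) ≠ ψ (crossingPoint C f j)) (p : X) :
    (crossingPoints C f).countP (fun x => ψ x = p) ≤ 2 := by
  rw [crossingPoints, Multiset.countP_map, ← Finset.filter_val, Finset.card_val,
    ← card_filter_add_card_filter_not (p := fun i => f i ∈ C), filter_filter, filter_filter]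
  have hside : ∀ (q : ZMod n → Prop) [DecidablePred q],
      (∀ i j, q i → q j → (f i ∈ C ↔ f j ∈ C)) →
      #{i ∈ crossings C f | ψ (crossingPoint C f i) = p ∧ q i} ≤ 1 := by
    refine fun q _ hq => card_le_one.mpr fun i hi j hj => by_contra fun hij => ?_
    simp only [mem_filter] at hi hj
    exact h i hi.1 j hj.1 hij (hq i j hi.2.2 hj.2.2) (hi.2.1.trans hj.2.1.symm)
  have hin := hside (fun i => f i ∈ C) fun _ _ => iff_of_true
  have hout := hside (fun i => f i ∉ C) fun _ _ => iff_of_false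
  omega

end Crossings

section Potential

variable {X : Type*} [MetricSpace X]

def displacement (ψ : X → X) (M : Multiset X) : ℝ :=
  (M.map fun x => dist x (ψ x)).sum

lemma displacement_nonneg (ψ : X → X) (M : Multiset X) : 0 ≤ displacement ψ M :=
  Multiset.sum_nonneg fun _ hx => by
    obtain ⟨y, -, rfl⟩ := Multiset.mem_map.mp hx
    exact dist_nonneg

lemma displacement_add (ψ : X → X) (M N : Multiset X) :
    displacement ψ (M + N) = displacement ψ M + displacement ψ N := by
  simp [displacement]

lemma displacement_redirect_le [DecidableEq X] (ψ : X → X) (p q : X) (M : Multiset X) :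
    displacement (fun x => if ψ x = p then q else ψ x) M ≤
      displacement ψ M + M.countP (fun x => ψ x = p) * dist p q := by
  induction M using Multiset.induction_on with
  | empty => simp [displacement]
  | cons a M ih =>
    simp only [displacement, Multiset.map_cons, Multiset.sum_cons, Multiset.countP_cons] at ih ⊢
    split_ifs with h
    · push_cast
      rw [h]
      linarith [dist_triangle a p q]
    · push_cast
      linarith

end Potential

section Merging

variable {X : Type*} [MetricSpace X] [DecidableEq X] {C : Finset X} {n : ℕ} [NeZero n]

theorem exists_perm_crossingPoints_add {f : ZMod n → X} {i j : ZMod n}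
    (hi : i ∈ crossings C f) (hj : j ∈ crossings C f) (hij : i ≠ j)
    (hside : f i ∈ C ↔ f j ∈ C) :
    ∃ e : Equiv.Perm (ZMod n),
      crossingPoints C (f ∘ e) + {crossingPoint C f i, crossingPoint C f j} =
        crossingPoints C f ∧
      tourWeight (f ∘ e) ≤
        tourWeight f + 2 * dist (crossingPoint C f i) (crossingPoint C f j) := by
  obtain ⟨e, he⟩ := exists_perm_tourEdges_add f hij
  have hside' : f (i + 1) ∈ C ↔ f (j + 1) ∈ C := by
    rw [mem_crossings, xor_def] at hi hj; tauto
  refine ⟨e, ?_, ?_⟩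
  · have key := congrArg (fun M => (M.map (crossingEndpoint C)).sum) he
    simp only [Multiset.map_add, Multiset.sum_add, sum_map_tourEdges,
      ← crossingPoints_eq_sum] at key
    simpa [crossingEndpoint_edge, hi, hj, crossingEndpoint_eq_zero hside,
      crossingEndpoint_eq_zero hside'] using key
  · have key := congrArg (fun M => (M.map (Sym2.lift ⟨dist, dist_comm⟩)).sum) he
    simp only [Multiset.map_add, Multiset.sum_add, ← tourWeight_eq_sum_map_tourEdges] at key
    simp only [Multiset.insert_eq_cons, Multiset.map_cons, Multiset.map_singleton,
      Multiset.sum_cons, Multiset.sum_singleton, Sym2.lift_mk] at key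
    by_cases hfi : f i ∈ C
    · rw [crossingPoint, crossingPoint, if_pos hfi, if_pos (hside.mp hfi)]
      linarith [dist_triangle4 (f (i + 1)) (f i) (f j) (f (j + 1)), dist_comm (f i) (f (i + 1))]
    · rw [crossingPoint, crossingPoint, if_neg hfi, if_neg (hside.not.mp hfi)]
      linarith [dist_triangle4 (f i) (f (i + 1)) (f (j + 1)) (f j), dist_comm (f j) (f (j + 1))]

theorem exists_perm_countP_crossingPoints_le_two (f : ZMod n → X) (ψ : X → X) :
    ∃ e : Equiv.Perm (ZMod n), crossingPoints C (f ∘ e) ≤ crossingPoints C f ∧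
      tourWeight (f ∘ e) + 2 * displacement ψ (crossingPoints C (f ∘ e)) ≤
        tourWeight f + 2 * displacement ψ (crossingPoints C f) ∧
      ∀ p, (crossingPoints C (f ∘ e)).countP (fun x => ψ x = p) ≤ 2 := by
  induction hN : (crossingPoints C f).card using Nat.strong_induction_on generalizing f with
  | _ N ih =>
    by_cases hpair : ∃ i ∈ crossings C f, ∃ j ∈ crossings C f, i ≠ j ∧
        (f i ∈ C ↔ f j ∈ C) ∧ ψ (crossingPoint C f i) = ψ (crossingPoint C f j)
    · obtain ⟨i, hi, j, hj, hij, hside, hψ⟩ := hpair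
      obtain ⟨e₁, hpts, hw₁⟩ := exists_perm_crossingPoints_add hi hj hij hside
      obtain ⟨e₂, hle, hw₂, hcount⟩ :=
        ih _ (by rw [← hN, ← hpts, Multiset.card_add]; simp) (f ∘ e₁) rfl
      refine ⟨e₂.trans e₁, hle.trans (hpts ▸ Multiset.le_add_right _ _), ?_, hcount⟩
      have hsplit := congrArg (displacement ψ) hpts
      rw [displacement_add] at hsplit
      simp only [displacement, Multiset.insert_eq_cons, Multiset.map_cons, Multiset.map_singleton,
        Multiset.sum_cons, Multiset.sum_singleton] at hsplit
      have hdist : dist (crossingPoint C f i) (crossingPoint C f j) ≤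
          dist (crossingPoint C f i) (ψ (crossingPoint C f i)) +
            dist (crossingPoint C f j) (ψ (crossingPoint C f j)) :=
        calc _ ≤ dist (crossingPoint C f i) (ψ (crossingPoint C f i)) +
              dist (crossingPoint C f j) (ψ (crossingPoint C f i)) := dist_triangle_right _ _ _
          _ = _ := by rw [hψ]
      rw [Equiv.coe_trans, ← Function.comp_assoc]
      simp only [displacement] at hw₂ ⊢
      linarith
    · push Not at hpair
      refine ⟨1, ?_, ?_, countP_crossingPoints_le_two hpair⟩ <;>
        simp only [Equiv.Perm.coe_one, Function.comp_id, le_refl]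

end Merging

section Collapse

variable {X : Type*} [MetricSpace X] [DecidableEq X]

inductive Collapsible : Finset X → ℝ → Prop
  | singleton (x : X) : Collapsible {x} 0
  | erase {V : Finset X} {c : ℝ} {p q : X} :
      q ∈ V.erase p → Collapsible (V.erase p) c → Collapsible V (c + dist p q)

variable {C : Finset X} {n : ℕ} [NeZero n]

theorem Collapsible.exists_perm_card_crossingPoints_le_two {V : Finset X} {c : ℝ}
    (hV : Collapsible V c) (f : ZMod n → X) (ψ : X → X)
    (hψ : ∀ x ∈ crossingPoints C f, ψ x ∈ V) :
    ∃ e : Equiv.Perm (ZMod n), (crossingPoints C (f ∘ e)).card ≤ 2 ∧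
      tourWeight (f ∘ e) ≤ tourWeight f + 2 * displacement ψ (crossingPoints C f) + 4 * c := by
  induction hV generalizing f ψ with
  | singleton x =>
    obtain ⟨e, hle, hw, hcount⟩ := exists_perm_countP_crossingPoints_le_two (C := C) f ψ
    refine ⟨e, ?_, by linarith [displacement_nonneg ψ (crossingPoints C (f ∘ e))]⟩
    have hloc : ∀ y ∈ crossingPoints C (f ∘ e), ψ y = x :=
      fun y hy => mem_singleton.mp (hψ y (Multiset.mem_of_le hle hy))
    exact Multiset.countP_eq_card.mpr hloc ▸ hcount x
  | @erase V c p q hq _ ih =>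
    obtain ⟨e₁, hle, hw₁, hcount⟩ := exists_perm_countP_crossingPoints_le_two (C := C) f ψ
    let ψ' := fun x => if ψ x = p then q else ψ x
    have hψ' : ∀ x ∈ crossingPoints C (f ∘ e₁), ψ' x ∈ V.erase p := by
      intro x hx
      by_cases h : ψ x = p
      · simpa [ψ', h] using hq
      · simpa [ψ', h] using hψ x (Multiset.mem_of_le hle hx)
    obtain ⟨e₂, hcard, hw₂⟩ := ih (f ∘ e₁) ψ' hψ'
    refine ⟨e₂.trans e₁, hcard, ?_⟩
    have hredirect := displacement_redirect_le ψ p q (crossingPoints C (f ∘ e₁))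
    have hmul : ((crossingPoints C (f ∘ e₁)).countP (fun x => ψ x = p) : ℝ) * dist p q ≤
        2 * dist p q :=
      mul_le_mul_of_nonneg_right (by exact_mod_cast hcount p) dist_nonneg
    rw [Equiv.coe_trans, ← Function.comp_assoc]
    linarith

end Collapse

section Graph

variable {X : Type*} [MetricSpace X] {W : Type*} [Finite W]

noncomputable def edgeWeight (ι : W → X) (H : SimpleGraph W) : ℝ :=
  ∑ e ∈ H.edgeSet.toFinite.toFinset,
    Sym2.lift ⟨fun a b => dist (ι a) (ι b), fun _ _ => dist_comm _ _⟩ e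

lemma edgeWeight_nonneg (ι : W → X) (H : SimpleGraph W) : 0 ≤ edgeWeight ι H :=
  sum_nonneg fun e _ => e.ind fun _ _ => dist_nonneg

lemma edgeWeight_induce_compl_singleton_add_le (ι : W → X) {H : SimpleGraph W} {v u : W}
    (hvu : H.Adj v u) :
    edgeWeight (ι ∘ Subtype.val) (H.induce {v}ᶜ) + dist (ι v) (ι u) ≤ edgeWeight ι H := by
  classical
  set w : Sym2 W → ℝ := Sym2.lift ⟨fun a b => dist (ι a) (ι b), fun _ _ => dist_comm _ _⟩
  have hw : ∀ e, 0 ≤ w e := fun e => e.ind fun _ _ => dist_nonneg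
  have himage : (H.induce {v}ᶜ).edgeSet.toFinite.toFinset.image (Sym2.map Subtype.val) ⊆
      H.edgeSet.toFinite.toFinset.erase s(v, u) := by
    intro e he
    obtain ⟨e', he', rfl⟩ := mem_image.mp he
    induction e' using Sym2.ind with
    | _ a b =>
      have hab : H.Adj a b := by simpa using he'
      simp only [Sym2.map_mk, mem_erase, ne_eq, Sym2.eq, Sym2.rel_iff', Prod.mk.injEq,
        Prod.swap_prod_mk, Set.Finite.mem_toFinset, SimpleGraph.mem_edgeSet, hab, and_true]
      have ha : (a : W) ≠ v := a.2
      have hb : (b : W) ≠ v := b.2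
      tauto
  calc edgeWeight (ι ∘ Subtype.val) (H.induce {v}ᶜ) + dist (ι v) (ι u)
      = ∑ e ∈ (H.induce {v}ᶜ).edgeSet.toFinite.toFinset.image (Sym2.map Subtype.val), w e
          + w s(v, u) := by
        rw [sum_image fun _ _ _ _ h => Sym2.map.injective Subtype.val_injective h]
        exact congrArg (· + _) (sum_congr rfl fun e _ => e.ind fun _ _ => rfl)
    _ ≤ ∑ e ∈ H.edgeSet.toFinite.toFinset.erase s(v, u), w e + w s(v, u) := by
        gcongr
        exact fun e _ _ => hw e
    _ = edgeWeight ι H := sum_erase_add _ _ (by simpa using hvu)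

end Graph

theorem exists_collapsible_le_edgeWeight {X : Type*} [MetricSpace X] [DecidableEq X]
    {W : Type*} [Fintype W] {H : SimpleGraph W} (hH : H.Connected) (ι : W ↪ X) :
    ∃ c ≤ edgeWeight ι H, Collapsible (univ.map ι) c := by
  classical
  induction hN : Fintype.card W generalizing W with
  | zero => exact absurd hN (Fintype.card_pos_iff.mpr hH.nonempty).ne'
  | succ N ih =>
    rcases subsingleton_or_nontrivial W with hW | hW
    · obtain ⟨w⟩ := hH.nonempty
      refine ⟨0, edgeWeight_nonneg ι H, ?_⟩
      rw [eq_singleton_iff_unique_mem.mpr ⟨mem_univ w, fun x _ => Subsingleton.elim x w⟩,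
        map_singleton]
      exact .singleton _
    · obtain ⟨v, hv⟩ := hH.exists_connected_induce_compl_singleton_of_finite_nontrivial
      obtain ⟨u, hvu⟩ := hH.preconnected.exists_adj_of_nontrivial v
      obtain ⟨c, hc, hcon⟩ := ih hv ((Function.Embedding.subtype _).trans ι) (by
        simp [filter_ne', hN])
      refine ⟨c + dist (ι v) (ι u), ?_, ?_⟩
      · have hc' : c ≤ edgeWeight (ι ∘ Subtype.val) (H.induce {v}ᶜ) := hc
        linarith [edgeWeight_induce_compl_singleton_add_le ι hvu]
      · have hmap : univ.map ((Function.Embedding.subtype (· ∈ ({v}ᶜ : Set W))).trans ι) =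
            (univ.map ι).erase (ι v) := by
          ext x
          simp only [mem_map, mem_univ, true_and, Function.Embedding.trans_apply,
            Function.Embedding.coe_subtype, Subtype.exists, Set.mem_compl_iff,
            Set.mem_singleton_iff, mem_erase, exists_prop]
          constructor
          · rintro ⟨a, ha, rfl⟩
            exact ⟨ι.injective.ne ha, a, rfl⟩
          · rintro ⟨hx, a, rfl⟩
            exact ⟨a, fun h => hx (h ▸ rfl), rfl⟩
        have hu : ι u ∈ (univ.map ι).erase (ι v) :=
          mem_erase.mpr ⟨ι.injective.ne hvu.ne.symm, mem_map_of_mem ι (mem_univ u)⟩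
        exact .erase hu (hmap ▸ hcon)

section MinimumSpanningTree

variable {X : Type*} [MetricSpace X]

lemma mstWeight_nonneg (P : Finset X) : 0 ≤ mstWeight P :=
  Real.sInf_nonneg <| by
    rintro _ ⟨T, -, -, rfl⟩
    exact edgeWeight_nonneg _ T

lemma exists_connected_graphWeight_eq_mstWeight {P : Finset X} (hP : P.Nonempty) :
    ∃ T : SimpleGraph {x // x ∈ P}, T.Connected ∧ graphWeight P T = mstWeight P := by
  have : Nonempty {x // x ∈ P} := hP.to_subtype
  obtain ⟨T, -, hT⟩ := SimpleGraph.connected_top.exists_isTree_le (V := {x // x ∈ P})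
  set S := {w : ℝ | ∃ T : SimpleGraph {x // x ∈ P},
    T.Connected ∧ T.IsAcyclic ∧ w = graphWeight P T}
  have hfin : S.Finite := (Set.finite_range (graphWeight P)).subset <| by
    rintro _ ⟨T, -, -, rfl⟩
    exact ⟨T, rfl⟩
  have hne : S.Nonempty := ⟨graphWeight P T, T, hT.1, hT.2, rfl⟩
  obtain ⟨T, hconn, -, hw⟩ := hne.csInf_mem hfin
  exact ⟨T, hconn, hw.symm⟩

end MinimumSpanningTree

theorem patching_lemma_general {X : Type*} [MetricSpace X] (S C : Finset X)
    (n : ℕ) [NeZero n] (f : ZMod n → X) (hf : IsTour S f)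
    (P : Finset X)
    (hP : ∀ x : X, x ∈ P ↔ x ∈ C ∧
      ∃ i : ZMod n, Xor' (f i ∈ C) (f (i + 1) ∈ C) ∧ (f i = x ∨ f (i + 1) = x)) :
    ∃ f' : ZMod n → X, IsTour S f' ∧
      {i : ZMod n | Xor' (f' i ∈ C) (f' (i + 1) ∈ C)}.ncard ≤ 2 ∧
      tourWeight f' ≤ tourWeight f + 4 * mstWeight P := by
  classical
  have hPf : ∀ x ∈ crossingPoints C f, x ∈ P :=
    fun x hx => (hP x).mpr (mem_crossingPoints.mp hx)
  rcases P.eq_empty_or_nonempty with rfl | hPne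
  · have hzero : crossingPoints C f = 0 :=
      Multiset.eq_zero_of_forall_notMem fun x hx => notMem_empty x (hPf x hx)
    exact ⟨f, hf, (card_crossingPoints f).symm.trans_le (by simp [hzero]),
      by linarith [mstWeight_nonneg (∅ : Finset X)]⟩
  obtain ⟨T, hT, hTw⟩ := exists_connected_graphWeight_eq_mstWeight hPne
  obtain ⟨c, hc, hcon⟩ := exists_collapsible_le_edgeWeight hT (Function.Embedding.subtype _)
  rw [univ_eq_attach, attach_map_val] at hcon
  obtain ⟨e, hcard, hw⟩ := hcon.exists_perm_card_crossingPoints_le_two f id hPf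
  refine ⟨f ∘ e, hf.comp_perm e, (card_crossingPoints (f ∘ e)).symm.trans_le hcard, ?_⟩
  have hdisp : displacement id (crossingPoints C f) = 0 := by simp [displacement]
  linarith [hc.trans_eq hTw]

/-- **Patching Lemma.** Let `T` be a tour of `S` (given as `f : ZMod n → X` with `n = |S|`),
let `C ⊆ S`, and let `P` be the set of crossing points of `T` w.r.t. `C` (endpoints in `C`
of the edges of `T` having exactly one endpoint in `C`). Then there is a tour `T'` of `S`
crossing `C` at most twice with `w(T') ≤ w(T) + 4 * w(MST(P))`. -/
theorem patching_lemma {X : Type*} [MetricSpace X] (S C : Finset X) (hCS : C ⊆ S)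
    (n : ℕ) [NeZero n] (hn : n = S.card) (f : ZMod n → X) (hf : IsTour S f)
    (r : ℕ) (hr : {i : ZMod n | Xor' (f i ∈ C) (f (i + 1) ∈ C)}.ncard = r)
    (P : Finset X)
    (hP : ∀ x : X, x ∈ P ↔ x ∈ C ∧
      ∃ i : ZMod n, Xor' (f i ∈ C) (f (i + 1) ∈ C) ∧ (f i = x ∨ f (i + 1) = x)) :
    ∃ f' : ZMod n → X, IsTour S f' ∧
      {i : ZMod n | Xor' (f' i ∈ C) (f' (i + 1) ∈ C)}.ncard ≤ 2 ∧
      tourWeight f' ≤ tourWeight f + 4 * mstWeight P :=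
  patching_lemma_general S C n f hf P hP
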